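/- arXiv:2404.13803 — 5 statements merged into one kernel-verified Lean document; each statement's English description precedes it below -/
import Mathlib

section
/- If φ is a non-trivial exponential map on a k-domain B, then the ring of invariants B^φ is factorially closed in B; that is, for all nonzero a, b ∈ B, if ab ∈ B^φ then a ∈ B^φ and b ∈ B^φ. -/
open Polynomial in
structure ExpMap (k B : Type*) [CommRing k] [CommRing B] [Algebra k B] where
  toAlgHom : B →ₐ[k] Polynomial B
  eval_zero : ∀ b, (toAlgHom b).eval 0 = b
  coassoc : ∀ b, (toAlgHom b).map toAlgHom.toRingHom =
      Polynomial.eval₂ ((C : Polynomial B →+* Polynomial (Polynomial B)).comp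
        (C : B →+* Polynomial B)) (C X + X) (toAlgHom b)

noncomputable def ExpMap.invariants {k B : Type*} [CommRing k] [CommRing B] [Algebra k B]
    (φ : ExpMap k B) : Subalgebra k B :=
  AlgHom.equalizer φ.toAlgHom (Polynomial.CAlgHom)

/-- If φ is a non-trivial exponential map on a k-domain B, then B^φ is factorially
closed in B: for nonzero a, b, if a*b ∈ B^φ then a ∈ B^φ and b ∈ B^φ. -/
theorem expMap_invariants_factorially_closed
    {k B : Type*} [Field k] [CommRing B] [IsDomain B] [Algebra k B]
    (φ : ExpMap k B) (hnt : φ.invariants ≠ ⊤)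
    (a b : B) (ha : a ≠ 0) (hb : b ≠ 0) (hab : a * b ∈ φ.invariants) :
    a ∈ φ.invariants ∧ b ∈ φ.invariants := by
  have hmem : ∀ x : B, x ∈ φ.invariants ↔ φ.toAlgHom x = Polynomial.C x := by
    intro x
    simp [ExpMap.invariants, AlgHom.mem_equalizer, Polynomial.CAlgHom]
  have hane : φ.toAlgHom a ≠ 0 := fun h => ha (by simpa [h] using (φ.eval_zero a).symm)
  have hbne : φ.toAlgHom b ≠ 0 := fun h => hb (by simpa [h] using (φ.eval_zero b).symm)
  have hprod : φ.toAlgHom a * φ.toAlgHom b = Polynomial.C (a * b) := by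
    rw [← map_mul]; exact (hmem _).mp hab
  have hdeg : (φ.toAlgHom a).natDegree + (φ.toAlgHom b).natDegree = 0 := by
    rw [← Polynomial.natDegree_mul hane hbne, hprod, Polynomial.natDegree_C]
  have hda : (φ.toAlgHom a).natDegree = 0 := Nat.eq_zero_of_add_eq_zero_right hdeg
  have hdb : (φ.toAlgHom b).natDegree = 0 := Nat.eq_zero_of_add_eq_zero_left hdeg
  have key : ∀ x : B, x ≠ 0 → (φ.toAlgHom x).natDegree = 0 → x ∈ φ.invariants := by
    intro x hx hd
    rw [hmem]
    have := Polynomial.eq_C_of_natDegree_eq_zero hd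
    rw [this]
    congr 1
    have := φ.eval_zero x
    rwa [Polynomial.eq_C_of_natDegree_eq_zero hd, Polynomial.eval_C] at this
  exact ⟨key a ha hda, key b hb hdb⟩
end

section
/- Let φ be an exponential map on a k-domain B and S a multiplicative subset of B^φ \ {0}. Then φ extends to an exponential map S⁻¹φ on S⁻¹B defined by S⁻¹φ(a/s) = φ(a)/s, and the ring of invariants of S⁻¹φ equals S⁻¹(B^φ). Moreover, if φ is non-trivial then S⁻¹φ is non-trivial. -/
/-!
The elements of `S` are `φ`-invariant, so `φ(s) = s` is a unit of `S⁻¹B[U]` and the universal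
property of localization extends `φ` to `S⁻¹B → S⁻¹B[U]`. The axioms of an exponential map are
equalities of ring homomorphisms out of `S⁻¹B`, so it suffices to check them on `B`. Invariance of
`a/s` reduces to that of `a`, and a polynomial over `B` dies in `S⁻¹B[U]` exactly when some
`t ∈ S` kills it; since `t` is invariant, `φ(ta) = t φ(a)`, so `ta` is the invariant numerator.
Non-triviality passes to `S⁻¹B` because `B → S⁻¹B` is injective when `B` is a domain and `0 ∉ S`.
-/

open Polynomial

section PolynomialLocalization

variable {R A : Type*} [CommRing R] [CommRing A]

theorem Polynomial.map_mapRingHom_eval₂_C_X_add_X (f : R →+* A) (p : R[X]) :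
    (eval₂ ((C : R[X] →+* R[X][X]).comp C) (C X + X) p).map (mapRingHom f) =
      eval₂ ((C : A[X] →+* A[X][X]).comp C) (C X + X) (p.map f) := by
  rw [eval₂_map]
  change mapRingHom (mapRingHom f) (eval₂ _ _ p) = _
  rw [hom_eval₂]
  congr 1
  · ext b
    simp
  · simp

attribute [local instance] Polynomial.algebra Polynomial.isLocalization in
theorem Polynomial.map_algebraMap_eq_map_iff [Algebra R A] (S : Submonoid R)
    [IsLocalization S A] {p q : R[X]} :
    p.map (algebraMap R A) = q.map (algebraMap R A) ↔ ∃ t ∈ S, C t * p = C t * q := by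
  change algebraMap R[X] A[X] p = algebraMap R[X] A[X] q ↔ _
  rw [IsLocalization.eq_iff_exists (S.map C)]
  constructor
  · rintro ⟨⟨_, t, ht, rfl⟩, h⟩
    exact ⟨t, ht, h⟩
  · rintro ⟨t, ht, h⟩
    exact ⟨⟨C t, t, ht, rfl⟩, h⟩

end PolynomialLocalization

namespace ExpMap

variable {k B : Type*} [CommRing k] [CommRing B] [Algebra k B] (φ : ExpMap k B)

theorem mem_invariants_iff {b : B} : b ∈ φ.invariants ↔ φ.toAlgHom b = C b := Iff.rfl

theorem mul_mem_invariants_iff {t : B} (ht : t ∈ φ.invariants) (a : B) :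
    t * a ∈ φ.invariants ↔ C t * φ.toAlgHom a = C t * C a := by
  rw [mem_invariants_iff, map_mul, (φ.mem_invariants_iff).1 ht, C_mul]

section Localization

variable (L : Type*) [CommRing L] [Algebra B L] [Algebra k L] [IsScalarTower k B L]
  (S : Submonoid B) [IsLocalization S L] (hS : (S : Set B) ⊆ φ.invariants)

noncomputable def localizationAlgHom : L →ₐ[k] L[X] :=
  IsLocalization.liftAlgHom (M := S)
    (f := (mapAlgHom (IsScalarTower.toAlgHom k B L)).comp φ.toAlgHom) fun s => by
      change IsUnit ((φ.toAlgHom s).map (algebraMap B L))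
      rw [(φ.mem_invariants_iff).1 (hS s.2), map_C]
      exact (IsLocalization.map_units L s).map C

theorem localizationAlgHom_algebraMap (a : B) :
    φ.localizationAlgHom L S hS (algebraMap B L a) = (φ.toAlgHom a).map (algebraMap B L) :=
  IsLocalization.lift_eq _ a

theorem eval_zero_localizationAlgHom (x : L) : (φ.localizationAlgHom L S hS x).eval 0 = x := by
  suffices h : ((evalRingHom 0).comp (φ.localizationAlgHom L S hS).toRingHom).comp
      (algebraMap B L) = (RingHom.id L).comp (algebraMap B L) from
    RingHom.congr_fun (IsLocalization.ringHom_ext S h) x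
  ext a
  change (φ.localizationAlgHom L S hS (algebraMap B L a)).eval 0 = algebraMap B L a
  rw [localizationAlgHom_algebraMap, eval_map, eval₂_at_zero, coeff_zero_eq_eval_zero,
    φ.eval_zero]

theorem coassoc_localizationAlgHom (x : L) :
    (φ.localizationAlgHom L S hS x).map (φ.localizationAlgHom L S hS).toRingHom =
      eval₂ ((C : L[X] →+* L[X][X]).comp C) (C X + X) (φ.localizationAlgHom L S hS x) := by
  set ψ := φ.localizationAlgHom L S hS
  have hψ : ψ.toRingHom.comp (algebraMap B L) =
      (mapRingHom (algebraMap B L)).comp φ.toAlgHom.toRingHom :=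
    RingHom.ext (φ.localizationAlgHom_algebraMap L S hS)
  suffices h : ((mapRingHom ψ.toRingHom).comp ψ.toRingHom).comp (algebraMap B L) =
      ((eval₂RingHom ((C : L[X] →+* L[X][X]).comp C) (C X + X)).comp ψ.toRingHom).comp
        (algebraMap B L) from
    RingHom.congr_fun (IsLocalization.ringHom_ext S h) x
  refine RingHom.ext fun a => ?_
  change (ψ (algebraMap B L a)).map ψ.toRingHom =
    eval₂ ((C : L[X] →+* L[X][X]).comp C) (C X + X) (ψ (algebraMap B L a))
  rw [localizationAlgHom_algebraMap, Polynomial.map_map, hψ, ← Polynomial.map_map, φ.coassoc,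
    map_mapRingHom_eval₂_C_X_add_X]

noncomputable def localization : ExpMap k L where
  toAlgHom := φ.localizationAlgHom L S hS
  eval_zero := φ.eval_zero_localizationAlgHom L S hS
  coassoc := φ.coassoc_localizationAlgHom L S hS

theorem algebraMap_mem_invariants_localization_iff_map_eq (a : B) :
    algebraMap B L a ∈ (φ.localization L S hS).invariants ↔
      (φ.toAlgHom a).map (algebraMap B L) = (C a).map (algebraMap B L) := by
  change φ.localizationAlgHom L S hS (algebraMap B L a) = C (algebraMap B L a) ↔ _
  rw [localizationAlgHom_algebraMap, map_C]

theorem algebraMap_mem_invariants_localization_iff (a : B) :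
    algebraMap B L a ∈ (φ.localization L S hS).invariants ↔ ∃ t ∈ S, t * a ∈ φ.invariants := by
  rw [algebraMap_mem_invariants_localization_iff_map_eq, map_algebraMap_eq_map_iff S]
  exact exists_congr fun t => and_congr_right fun ht => (φ.mul_mem_invariants_iff (hS ht) a).symm

theorem mul_algebraMap_mem_invariants_localization_iff {x : L} {s : B} (hs : s ∈ S) :
    x * algebraMap B L s ∈ (φ.localization L S hS).invariants ↔
      x ∈ (φ.localization L S hS).invariants := by
  have hsψ : algebraMap B L s ∈ (φ.localization L S hS).invariants :=
    (φ.algebraMap_mem_invariants_localization_iff L S hS s).2 ⟨1, S.one_mem, by simpa using hS hs⟩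
  have hunit : IsUnit (C (algebraMap B L s)) := (IsLocalization.map_units L ⟨s, hs⟩).map C
  rw [mem_invariants_iff, mem_invariants_iff, map_mul, (mem_invariants_iff _).1 hsψ, C_mul,
    hunit.mul_left_inj]

theorem mem_invariants_localization_iff (x : L) :
    x ∈ (φ.localization L S hS).invariants ↔
      ∃ a ∈ φ.invariants, ∃ s ∈ S, x * algebraMap B L s = algebraMap B L a := by
  constructor
  · intro hx
    obtain ⟨⟨a, s⟩, rfl⟩ := IsLocalization.mk'_surjective S x
    have hspec := IsLocalization.mk'_spec L a s
    rw [← φ.mul_algebraMap_mem_invariants_localization_iff L S hS s.2, hspec,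
      algebraMap_mem_invariants_localization_iff] at hx
    obtain ⟨t, ht, hta⟩ := hx
    refine ⟨t * a, hta, s * t, S.mul_mem s.2 ht, ?_⟩
    rw [map_mul, ← mul_assoc, hspec, map_mul, mul_comm]
  · rintro ⟨a, ha, s, hs, hxs⟩
    rw [← φ.mul_algebraMap_mem_invariants_localization_iff L S hS hs, hxs,
      algebraMap_mem_invariants_localization_iff]
    exact ⟨1, S.one_mem, by rwa [one_mul]⟩

theorem invariants_localization_ne_top (hinj : Function.Injective (algebraMap B L))
    (hφ : φ.invariants ≠ ⊤) : (φ.localization L S hS).invariants ≠ ⊤ := by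
  refine fun hψ => hφ (eq_top_iff.2 fun b _ => ?_)
  have hb : algebraMap B L b ∈ (φ.localization L S hS).invariants := hψ ▸ Algebra.mem_top
  rw [algebraMap_mem_invariants_localization_iff_map_eq] at hb
  exact map_injective _ hinj hb

end Localization

end ExpMap

/-- An exponential map φ on a k-domain B extends to the localization S⁻¹B at a
multiplicative set S ⊆ B^φ \ {0}, via S⁻¹φ(a/s) = φ(a)/s; its invariant ring is
S⁻¹(B^φ), and it is non-trivial if φ is. -/
theorem expMap_localization
    {k B L : Type*} [Field k] [CommRing B] [IsDomain B] [Algebra k B]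
    [CommRing L] [Algebra B L] [Algebra k L] [IsScalarTower k B L]
    (φ : ExpMap k B) (S : Submonoid B)
    (hS : (S : Set B) ⊆ (φ.invariants : Set B)) (h0 : (0 : B) ∉ S)
    [IsLocalization S L] :
    ∃ ψ : ExpMap k L,
      (∀ a : B, ψ.toAlgHom (algebraMap B L a)
          = (φ.toAlgHom a).map (algebraMap B L)) ∧
      (∀ x : L, x ∈ ψ.invariants ↔
          ∃ a ∈ φ.invariants, ∃ s ∈ S, x * algebraMap B L s = algebraMap B L a) ∧
      (φ.invariants ≠ ⊤ → ψ.invariants ≠ ⊤) := by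
  have hinj : Function.Injective (algebraMap B L) :=
    IsLocalization.injective L fun s hs =>
      mem_nonZeroDivisors_of_ne_zero (ne_of_mem_of_not_mem hs h0)
  exact ⟨φ.localization L S hS, φ.localizationAlgHom_algebraMap L S hS,
    φ.mem_invariants_localization_iff L S hS, φ.invariants_localization_ne_top L S hS hinj⟩
end

section
/- Let A = k[X₁,…,X_m,Y,Z,T]/(α(X₁,…,X_m)Y − F(X₁,…,X_m,Z,T)) with α ∉ k and F of positive degree in Z or T. Then k[x₁,…,x_m,z,t] is contained in the Derksen invariant DK(A). -/
/-- The Derksen invariant: the k-subalgebra generated by the invariant rings of all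
non-trivial exponential maps. -/
noncomputable def Derksen (k B : Type*) [CommRing k] [CommRing B] [Algebra k B] :
    Subalgebra k B :=
  Algebra.adjoin k (⋃ φ ∈ {φ : ExpMap k B | φ.invariants ≠ ⊤}, (φ.invariants : Set B))

/-- The Makar-Limanov invariant: the intersection of the invariant rings of all
exponential maps. -/
noncomputable def MakarLimanov (k B : Type*) [CommRing k] [CommRing B] [Algebra k B] :
    Subalgebra k B :=
  ⨅ φ : ExpMap k B, φ.invariants

open MvPolynomial

/-- The relation α(X₁,…,X_m)·Y − F(X₁,…,X_m,Z,T) in k[X₁,…,X_m,Y,Z,T];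
variables: `Sum.inl i` = Xᵢ, `Sum.inr 0` = Y, `Sum.inr 1` = Z, `Sum.inr 2` = T,
with F given as a polynomial in the Xᵢ and Z = `Sum.inr 0`, T = `Sum.inr 1`. -/
noncomputable def relA {k : Type*} [CommRing k] {m : ℕ}
    (α : MvPolynomial (Fin m) k) (F : MvPolynomial (Fin m ⊕ Fin 2) k) :
    MvPolynomial (Fin m ⊕ Fin 3) k :=
  rename Sum.inl α * X (Sum.inr 0) - rename (Sum.map id Fin.succ) F

/-- The ring A = k[X₁,…,X_m,Y,Z,T]/(αY − F). -/
noncomputable abbrev RingA {k : Type*} [CommRing k] {m : ℕ}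
    (α : MvPolynomial (Fin m) k) (F : MvPolynomial (Fin m ⊕ Fin 2) k) :=
  MvPolynomial (Fin m ⊕ Fin 3) k ⧸ Ideal.span {relA α F}

/-- The image of a polynomial in A. -/
noncomputable def toA {k : Type*} [CommRing k] {m : ℕ}
    (α : MvPolynomial (Fin m) k) (F : MvPolynomial (Fin m ⊕ Fin 2) k) :
    MvPolynomial (Fin m ⊕ Fin 3) k →ₐ[k] RingA α F :=
  Ideal.Quotient.mkₐ k _

/-!
Write `w` for `z` or `t` and `U` for the variable of `A[U]`. On the polynomial ring
`k[X₁,…,X_m,Y,Z,T]` the substitution `w ↦ w + αU`, `y ↦ y + (F(w + αU) − F)/α`, all other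
variables fixed, is an exponential map (coassociativity at `y` holds after multiplying by
`α`, in a domain), and it fixes `αY − F`, so it descends to `A`. Its invariants contain the
`xᵢ` and the other one of `z, t`, and it is non-trivial because `w ↦ w + αU` and `α ≠ 0`
in `A`: sending `y` to `F/α` maps `A` to the fraction field of `k[X₁,…,X_m,Z,T]`. Shifting
`z`, resp. `t`, puts every generator of `k[x₁,…,x_m,z,t]` into an invariant ring of a
non-trivial exponential map.
-/

open scoped Polynomial

noncomputable def addVarAlgHom (k B : Type*) [CommRing k] [CommRing B] [Algebra k B] :
    B[X] →ₐ[k] B[X][X] :=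
  (Polynomial.aeval (Polynomial.C Polynomial.X + Polynomial.X)).restrictScalars k

section ExpMapConstruction

variable {k B : Type*} [CommRing k] [CommRing B] [Algebra k B]

@[simp]
lemma addVarAlgHom_C (b : B) :
    addVarAlgHom k B (Polynomial.C b) = Polynomial.C (Polynomial.C b) := by
  simp [addVarAlgHom]

@[simp]
lemma addVarAlgHom_X :
    addVarAlgHom k B Polynomial.X = Polynomial.C Polynomial.X + Polynomial.X := by
  simp [addVarAlgHom]

noncomputable def coassocSubalgebra (φ : B →ₐ[k] B[X]) : Subalgebra k B :=
  AlgHom.equalizer ((Polynomial.mapAlgHom φ).comp φ) ((addVarAlgHom k B).comp φ)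

lemma mem_coassocSubalgebra_iff {φ : B →ₐ[k] B[X]} {b : B} :
    b ∈ coassocSubalgebra φ ↔ (φ b).map (φ : B →+* B[X]) = addVarAlgHom k B (φ b) :=
  Iff.rfl

noncomputable def ExpMap.ofAdjoin (φ : B →ₐ[k] B[X]) {s : Set B}
    (hs : Algebra.adjoin k s = ⊤) (h0 : ∀ b ∈ s, (φ b).eval 0 = b)
    (h1 : s ⊆ coassocSubalgebra φ) : ExpMap k B where
  toAlgHom := φ
  eval_zero b := by
    have : ((Polynomial.aeval (0 : B)).restrictScalars k).comp φ = AlgHom.id k B :=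
      AlgHom.ext_of_adjoin_eq_top hs fun b hb => by simpa using h0 b hb
    simpa using AlgHom.congr_fun this b
  coassoc b := by
    have : coassocSubalgebra φ = ⊤ := top_unique (hs ▸ Algebra.adjoin_le h1)
    exact mem_coassocSubalgebra_iff.1 (this ▸ Algebra.mem_top)

lemma mem_coassocSubalgebra_of_eq_C_add {φ : B →ₐ[k] B[X]} {b c : B}
    (hb : φ b = Polynomial.C b + Polynomial.C c * Polynomial.X) (hc : φ c = Polynomial.C c) :
    b ∈ coassocSubalgebra φ := by
  simp only [mem_coassocSubalgebra_iff, map_add, map_mul, Polynomial.map_add,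
    Polynomial.map_mul, Polynomial.map_C, Polynomial.map_X, AlgHom.coe_toRingHom, hb, hc,
    addVarAlgHom_C, addVarAlgHom_X]
  ring

lemma mem_coassocSubalgebra_of_mul_eq [IsDomain B] {φ : B →ₐ[k] B[X]} {a b f : B} {D : B[X]}
    (ha : a ≠ 0) (hφa : φ a = Polynomial.C a) (hf : f ∈ coassocSubalgebra φ)
    (hb : φ b = Polynomial.C b + Polynomial.X * D)
    (hD : Polynomial.C a * Polynomial.X * D = φ f - Polynomial.C f) :
    b ∈ coassocSubalgebra φ := by
  rw [mem_coassocSubalgebra_iff] at hf ⊢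
  have hM := congrArg (Polynomial.map (φ : B →+* B[X])) hD
  have hS := congrArg (addVarAlgHom k B) hD
  have hC := congrArg (Polynomial.C : B[X] →+* B[X][X]) hD
  simp only [Polynomial.map_mul, Polynomial.map_sub, Polynomial.map_C, Polynomial.map_X,
    AlgHom.coe_toRingHom, hφa, map_mul, map_sub, addVarAlgHom_C, addVarAlgHom_X] at hM hS hC
  have ha' : (Polynomial.C (Polynomial.C a) : B[X][X]) ≠ 0 := by simpa using ha
  refine mul_left_cancel₀ ha' ?_
  simp only [hb, Polynomial.map_add, Polynomial.map_mul, Polynomial.map_C, Polynomial.map_X,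
    AlgHom.coe_toRingHom, map_add, map_mul, addVarAlgHom_C, addVarAlgHom_X]
  linear_combination hC + hM - hS + hf

variable {B' : Type*} [CommRing B'] [Algebra k B']

noncomputable def ExpMap.ofSurjective (φ : ExpMap k B) {π : B →ₐ[k] B'}
    (hπ : Function.Surjective π) (ψ : B' →ₐ[k] B'[X])
    (hψ : ∀ b, ψ (π b) = (φ.toAlgHom b).map (π : B →+* B')) : ExpMap k B' where
  toAlgHom := ψ
  eval_zero b' := by
    obtain ⟨b, rfl⟩ := hπ b'
    rw [hψ, Polynomial.eval_zero_map, φ.eval_zero, AlgHom.coe_toRingHom]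
  coassoc b' := by
    obtain ⟨b, rfl⟩ := hπ b'
    have hcomp : ψ.toRingHom.comp (π : B →+* B')
        = (Polynomial.mapRingHom (π : B →+* B')).comp φ.toAlgHom.toRingHom :=
      RingHom.ext hψ
    rw [hψ, Polynomial.map_map, hcomp, ← Polynomial.map_map, φ.coassoc,
      ← Polynomial.coe_mapRingHom (Polynomial.mapRingHom _), Polynomial.hom_eval₂,
      Polynomial.eval₂_map]
    congr 1
    · ext; simp
    · simp

noncomputable def ExpMap.quotientSpan (φ : ExpMap k B) {r : B} (hr : r ∈ φ.invariants) :
    ExpMap k (B ⧸ Ideal.span {r}) :=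
  φ.ofSurjective (Ideal.Quotient.mkₐ_surjective k _)
    (Ideal.Quotient.liftₐ _ ((Polynomial.mapAlgHom (Ideal.Quotient.mkₐ k _)).comp φ.toAlgHom)
      (fun b hb => by
        obtain ⟨c, rfl⟩ := Ideal.mem_span_singleton'.1 hb
        have : φ.toAlgHom r = Polynomial.C r := (AlgHom.mem_equalizer _ _ _).1 hr
        simp [this]))
    (fun _ => rfl)

lemma ExpMap.quotientSpan_mk (φ : ExpMap k B) {r : B} (hr : r ∈ φ.invariants) (b : B) :
    (φ.quotientSpan hr).toAlgHom (Ideal.Quotient.mk _ b)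
      = (φ.toAlgHom b).map (Ideal.Quotient.mk _) :=
  rfl

lemma ExpMap.mk_mem_invariants_quotientSpan (φ : ExpMap k B) {r b : B} (hr : r ∈ φ.invariants)
    (hb : b ∈ φ.invariants) : Ideal.Quotient.mk _ b ∈ (φ.quotientSpan hr).invariants := by
  have : φ.toAlgHom b = Polynomial.C b := (AlgHom.mem_equalizer _ _ _).1 hb
  exact (AlgHom.mem_equalizer _ _ _).2 (by simp [ExpMap.quotientSpan_mk, this])

end ExpMapConstruction

lemma MvPolynomial.rename_mem_of_forall_X_mem {R σ τ : Type*} [CommRing R]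
    {S : Subalgebra R (MvPolynomial τ R)} {f : σ → τ} (h : ∀ s, X (f s) ∈ S)
    (p : MvPolynomial σ R) : rename f p ∈ S := by
  have : rename f p ∈ Algebra.adjoin R (Set.range (X ∘ f : σ → MvPolynomial τ R)) := by
    rw [Algebra.adjoin_range_eq_range_aeval]
    exact ⟨p, by rw [rename_eq_aeval]; rfl⟩
  exact Algebra.adjoin_le (Set.range_subset_iff.2 h) this

section ShiftExpMap

variable {k : Type*} [Field k] {m : ℕ} (α : MvPolynomial (Fin m) k)
  (F : MvPolynomial (Fin m ⊕ Fin 2) k) (j : Fin 2)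

noncomputable def shiftCoeff (s : Fin m ⊕ Fin 3) : MvPolynomial (Fin m ⊕ Fin 3) k :=
  if s = Sum.inr j.succ then rename Sum.inl α else 0

noncomputable def translation :
    MvPolynomial (Fin m ⊕ Fin 3) k →ₐ[k] (MvPolynomial (Fin m ⊕ Fin 3) k)[X] :=
  aeval fun s => Polynomial.C (X s) + Polynomial.C (shiftCoeff α j s) * Polynomial.X

lemma translation_sub_C_mem (p : MvPolynomial (Fin m ⊕ Fin 3) k) :
    translation α j p - Polynomial.C p
      ∈ Ideal.span {Polynomial.C (rename Sum.inl α) * Polynomial.X} := by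
  let I := Ideal.span {(Polynomial.C (rename Sum.inl α) * Polynomial.X :
    (MvPolynomial (Fin m ⊕ Fin 3) k)[X])}
  have : (Ideal.Quotient.mkₐ k I).comp (translation α j)
      = (Ideal.Quotient.mkₐ k I).comp Polynomial.CAlgHom := by
    refine MvPolynomial.algHom_ext fun s => ?_
    simp only [AlgHom.comp_apply, translation, aeval_X, Ideal.Quotient.mkₐ_eq_mk,
      Polynomial.CAlgHom_apply, map_add, add_eq_left, shiftCoeff]
    split_ifs
    · exact Ideal.Quotient.eq_zero_iff_mem.2 (Ideal.subset_span rfl)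
    · simp
  exact Ideal.Quotient.eq.1 (AlgHom.congr_fun this p)

noncomputable def differenceQuotient : (MvPolynomial (Fin m ⊕ Fin 3) k)[X] :=
  (Ideal.mem_span_singleton'.1
    (translation_sub_C_mem α j (rename (Sum.map id Fin.succ) F))).choose

lemma C_mul_X_mul_differenceQuotient :
    Polynomial.C (rename Sum.inl α) * Polynomial.X * differenceQuotient α F j
      = translation α j (rename (Sum.map id Fin.succ) F)
        - Polynomial.C (rename (Sum.map id Fin.succ) F) := by
  rw [mul_comm]
  exact (Ideal.mem_span_singleton'.1
    (translation_sub_C_mem α j (rename (Sum.map id Fin.succ) F))).choose_spec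

noncomputable def polyExpAlgHom :
    MvPolynomial (Fin m ⊕ Fin 3) k →ₐ[k] (MvPolynomial (Fin m ⊕ Fin 3) k)[X] :=
  aeval fun s => if s = Sum.inr 0 then Polynomial.C (X s) + Polynomial.X * differenceQuotient α F j
    else Polynomial.C (X s) + Polynomial.C (shiftCoeff α j s) * Polynomial.X

lemma polyExpAlgHom_X_of_ne {s : Fin m ⊕ Fin 3} (hs : s ≠ Sum.inr 0) :
    polyExpAlgHom α F j (X s)
      = Polynomial.C (X s) + Polynomial.C (shiftCoeff α j s) * Polynomial.X := by
  simp [polyExpAlgHom, hs]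

lemma polyExpAlgHom_X_zero :
    polyExpAlgHom α F j (X (Sum.inr 0))
      = Polynomial.C (X (Sum.inr 0)) + Polynomial.X * differenceQuotient α F j := by
  simp [polyExpAlgHom]

lemma sum_map_succ_ne_inr_zero (s : Fin m ⊕ Fin 2) :
    Sum.map id Fin.succ s ≠ (Sum.inr 0 : Fin m ⊕ Fin 3) := by
  cases s <;> simp [Fin.succ_ne_zero]

lemma polyExpAlgHom_rename_inl (p : MvPolynomial (Fin m) k) :
    polyExpAlgHom α F j (rename Sum.inl p) = Polynomial.C (rename Sum.inl p) := by
  refine (AlgHom.mem_equalizer _ Polynomial.CAlgHom _).1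
    (rename_mem_of_forall_X_mem (fun i => (AlgHom.mem_equalizer _ _ _).2 ?_) p)
  simp [polyExpAlgHom_X_of_ne, shiftCoeff]

lemma polyExpAlgHom_shiftCoeff (s : Fin m ⊕ Fin 3) :
    polyExpAlgHom α F j (shiftCoeff α j s) = Polynomial.C (shiftCoeff α j s) := by
  unfold shiftCoeff
  split_ifs
  · exact polyExpAlgHom_rename_inl α F j α
  · simp

lemma polyExpAlgHom_rename_sum_map (p : MvPolynomial (Fin m ⊕ Fin 2) k) :
    polyExpAlgHom α F j (rename (Sum.map id Fin.succ) p)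
      = translation α j (rename (Sum.map id Fin.succ) p) :=
  (AlgHom.mem_equalizer _ _ _).1 (rename_mem_of_forall_X_mem (fun s =>
    (AlgHom.mem_equalizer _ _ _).2
      (by simp [polyExpAlgHom_X_of_ne _ _ _ (sum_map_succ_ne_inr_zero s), translation])) p)

lemma X_mem_coassocSubalgebra_of_ne {s : Fin m ⊕ Fin 3} (hs : s ≠ Sum.inr 0) :
    X s ∈ coassocSubalgebra (polyExpAlgHom α F j) :=
  mem_coassocSubalgebra_of_eq_C_add (polyExpAlgHom_X_of_ne α F j hs)
    (polyExpAlgHom_shiftCoeff α F j s)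

lemma X_zero_mem_coassocSubalgebra (hα : α ≠ 0) :
    X (Sum.inr 0) ∈ coassocSubalgebra (polyExpAlgHom α F j) := by
  refine mem_coassocSubalgebra_of_mul_eq (f := rename (Sum.map id Fin.succ) F) ?_
    (polyExpAlgHom_rename_inl α F j α)
    (rename_mem_of_forall_X_mem (fun s =>
      X_mem_coassocSubalgebra_of_ne α F j (sum_map_succ_ne_inr_zero s)) F)
    (polyExpAlgHom_X_zero α F j) ?_
  · exact (map_ne_zero_iff _ (rename_injective _ Sum.inl_injective)).2 hα
  · rw [C_mul_X_mul_differenceQuotient, polyExpAlgHom_rename_sum_map]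

noncomputable def polyExpMap (hα : α ≠ 0) : ExpMap k (MvPolynomial (Fin m ⊕ Fin 3) k) :=
  ExpMap.ofAdjoin (polyExpAlgHom α F j) adjoin_range_X
    (by
      rintro _ ⟨s, rfl⟩
      by_cases hs : s = Sum.inr 0
      · simp [hs, polyExpAlgHom_X_zero]
      · simp [polyExpAlgHom_X_of_ne α F j hs])
    (by
      rintro _ ⟨s, rfl⟩
      by_cases hs : s = Sum.inr 0
      · exact hs ▸ X_zero_mem_coassocSubalgebra α F j hα
      · exact X_mem_coassocSubalgebra_of_ne α F j hs)

lemma relA_mem_invariants (hα : α ≠ 0) : relA α F ∈ (polyExpMap α F j hα).invariants := by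
  refine (AlgHom.mem_equalizer _ _ _).2 ?_
  change polyExpAlgHom α F j (relA α F) = _
  rw [relA, map_sub, map_mul, polyExpAlgHom_rename_inl, polyExpAlgHom_X_zero,
    polyExpAlgHom_rename_sum_map, Polynomial.CAlgHom_apply, map_sub, map_mul]
  linear_combination C_mul_X_mul_differenceQuotient α F j

end ShiftExpMap

section QuotientExpMap

variable {k : Type*} [Field k] {m : ℕ} (α : MvPolynomial (Fin m) k)
  (F : MvPolynomial (Fin m ⊕ Fin 2) k) (j : Fin 2)

noncomputable def quotExpMap (hα : α ≠ 0) : ExpMap k (RingA α F) :=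
  (polyExpMap α F j hα).quotientSpan (relA_mem_invariants α F j hα)

lemma quotExpMap_toA (hα : α ≠ 0) (p : MvPolynomial (Fin m ⊕ Fin 3) k) :
    (quotExpMap α F j hα).toAlgHom (toA α F p) = (polyExpAlgHom α F j p).map (toA α F) :=
  rfl

lemma toA_X_mem_invariants (hα : α ≠ 0) {s : Fin m ⊕ Fin 3} (h0 : s ≠ Sum.inr 0)
    (hj : s ≠ Sum.inr j.succ) : toA α F (X s) ∈ (quotExpMap α F j hα).invariants := by
  refine (AlgHom.mem_equalizer _ _ _).2 ?_
  simp [quotExpMap_toA, polyExpAlgHom_X_of_ne α F j h0, shiftCoeff, hj]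

lemma toA_rename_inl_ne_zero (hα : α ≠ 0) : toA α F (rename Sum.inl α) ≠ 0 := by
  let S := MvPolynomial (Fin m ⊕ Fin 2) k
  let ι := algebraMap S (FractionRing S)
  let ψ : MvPolynomial (Fin m ⊕ Fin 3) k →ₐ[k] FractionRing S :=
    aeval (Sum.elim (fun i => ι (X (Sum.inl i)))
      (Fin.cons (ι F / ι (rename Sum.inl α)) fun i => ι (X (Sum.inr i))))
  have hψ (p : S) : ψ (rename (Sum.map id Fin.succ) p) = ι p := by
    have : ψ.comp (rename (Sum.map id Fin.succ))
        = IsScalarTower.toAlgHom k S (FractionRing S) :=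
      MvPolynomial.algHom_ext fun s => by cases s <;> simp [ψ, ι] <;> rfl
    exact AlgHom.congr_fun this p
  have hα' : ι (rename Sum.inl α) ≠ 0 :=
    (map_ne_zero_iff _ (IsFractionRing.injective S _)).2
      ((map_ne_zero_iff _ (rename_injective _ Sum.inl_injective)).2 hα)
  have hα_rename :
      rename (Sum.map id Fin.succ) (rename Sum.inl α : S) = rename Sum.inl α := by
    rw [rename_rename]
    rfl
  have hrel : ψ (relA α F) = 0 := by
    rw [relA, map_sub, map_mul, ← hα_rename, hψ, hψ]
    simp [ψ, mul_div_cancel₀ _ hα']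
  intro h
  obtain ⟨c, hc⟩ := Ideal.mem_span_singleton'.1 (Ideal.Quotient.eq_zero_iff_mem.1 h)
  apply hα'
  rw [← hψ, hα_rename, ← hc, map_mul, hrel, mul_zero]

lemma quotExpMap_invariants_ne_top (hα : α ≠ 0) : (quotExpMap α F j hα).invariants ≠ ⊤ := by
  intro htop
  have hinv := (AlgHom.mem_equalizer _ _ _).1
    (htop ▸ Algebra.mem_top : toA α F (X (Sum.inr j.succ)) ∈ (quotExpMap α F j hα).invariants)
  apply toA_rename_inl_ne_zero α F hα
  simpa [quotExpMap_toA, polyExpAlgHom_X_of_ne α F j (s := Sum.inr j.succ) (by simp),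
    shiftCoeff] using congrArg (Polynomial.coeff · 1) hinv

end QuotientExpMap

theorem subring_le_Derksen_general {k : Type*} [Field k] {m : ℕ}
    (α : MvPolynomial (Fin m) k) (F : MvPolynomial (Fin m ⊕ Fin 2) k)
    (hα : α ∉ Set.range (C : k → MvPolynomial (Fin m) k)) :
    Algebra.adjoin k ((Set.range fun i : Fin m => toA α F (X (Sum.inl i)))
        ∪ {toA α F (X (Sum.inr 1)), toA α F (X (Sum.inr 2))})
      ≤ Derksen k (RingA α F) := by
  have hα0 : α ≠ 0 := fun h => hα ⟨0, by rw [h, map_zero]⟩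
  have mem_Derksen (j : Fin 2) {s : Fin m ⊕ Fin 3} (h0 : s ≠ Sum.inr 0)
      (hj : s ≠ Sum.inr j.succ) : toA α F (X s) ∈ Derksen k (RingA α F) :=
    Algebra.subset_adjoin (Set.mem_biUnion (quotExpMap_invariants_ne_top α F j hα0)
      (toA_X_mem_invariants α F j hα0 h0 hj))
  rw [Algebra.adjoin_le_iff]
  rintro _ (⟨i, rfl⟩ | rfl | rfl)
  · exact mem_Derksen 0 (by simp) (by simp)
  · exact mem_Derksen 1 (by simp) (by simp)
  · exact mem_Derksen 0 (by simp) (by simp)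

/-- For A = k[X₁,…,X_m,Y,Z,T]/(αY − F) with α ∉ k and F of positive degree
in Z or T, the subring k[x₁,…,x_m,z,t] is contained in the Derksen invariant DK(A). -/
theorem subring_le_Derksen {k : Type*} [Field k] {m : ℕ}
    (α : MvPolynomial (Fin m) k) (F : MvPolynomial (Fin m ⊕ Fin 2) k)
    (hα : α ∉ Set.range (C : k → MvPolynomial (Fin m) k))
    (hF : 1 ≤ degreeOf (Sum.inr 0) F ∨ 1 ≤ degreeOf (Sum.inr 1) F)
    (hdom : IsDomain (RingA α F)) :
    Algebra.adjoin k ((Set.range fun i : Fin m => toA α F (X (Sum.inl i)))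
        ∪ {toA α F (X (Sum.inr 1)), toA α F (X (Sum.inr 2))})
      ≤ Derksen k (RingA α F) :=
  subring_le_Derksen_general α F hα
end

section
/- Let f(Z,T) ∈ k[Z,T] be such that k[Z,T]/(f) ≅ k[W] (a polynomial ring in one variable), and suppose there is a system of coordinates Z₁, T₁ of k[Z,T] (i.e., k[Z₁,T₁] = k[Z,T]) with f = b₀(Z₁) + b₁(Z₁)T₁ for some b₀, b₁ ∈ k[Z₁]. Then k[Z,T] = k[f][g] for some g, i.e., k[Z,T] is a polynomial ring in one variable over k[f]. -/
/-!
In the coordinates `(Z₁, T₁)`, i.e. in `k[x][y]` with `x ↦ Z₁` and `y ↦ T₁`, the line becomes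
`F = b₀(x) + b₁(x) y` with `k[x][y] ⧸ (F) ≅ k[W]`.

If `b₁ ≠ 0`, then `F` is prime, so `b₀` and `b₁` are coprime and `b₁` is a unit modulo `F`.
The units of `k[W]` are constants, so `b₁` is a nonzero constant and `k[Z, T] = k[f, Z₁]`.

If `b₁ = 0`, then `b₀ ≠ 0`, since `k[x][y]` and `k[W]` have Krull dimensions 2 and 1.
The image of `x` in `k[W]` is a root of `b₀`, hence a constant `a`, so `b₀ ∣ x - a`.
Thus `b₀` is linear and `k[Z, T] = k[f, T₁]`.

Any two generators of `k[Z, T]` are algebraically independent, as its transcendence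
degree is 2.
-/

open Polynomial

namespace Polynomial

theorem algHom_C_eq_aeval {R B : Type*} [CommSemiring R] [Semiring B] [Algebra R B]
    (φ : R[X][X] →ₐ[R] B) (p : R[X]) : φ (C p) = aeval (φ (C X)) p :=
  DFunLike.congr_fun (algHom_ext (f := φ.comp (IsScalarTower.toAlgHom R R[X] R[X][X]))
    (g := aeval (φ (C X))) (by simp)) p

section IsDomain

variable {R : Type*} [CommRing R] [IsDomain R]

theorem natDegree_eq_zero_of_isAlgebraic {p : R[X]} (hp : IsAlgebraic R p) :
    p.natDegree = 0 := by
  by_contra h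
  have hp0 : p ≠ 0 := by rintro rfl; exact h natDegree_zero
  exact p.transcendental h (mem_nonZeroDivisors_of_ne_zero (leadingCoeff_ne_zero.2 hp0)) hp

theorem eq_zero_of_dvd_C {p : R[X]} {r : R} (hp : p.natDegree ≠ 0) (h : p ∣ C r) : r = 0 := by
  by_contra hr
  have := natDegree_le_of_dvd h (C_ne_zero.2 hr)
  rw [natDegree_C] at this
  omega

end IsDomain

theorem ringKrullDim_polynomial_polynomial_ne (K : Type*) [Field K] :
    ringKrullDim K[X][X] ≠ ringKrullDim K[X] := by
  rw [ringKrullDim_of_isNoetherianRing, ringKrullDim_of_isNoetherianRing,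
    ringKrullDim_eq_zero_of_field]
  decide

section LineInPolynomialPolynomial

variable {K : Type*} [Field K] {b₀ b₁ : K[X]} {φ : K[X][X] →ₐ[K] K[X]}

theorem natDegree_eq_one_of_ker_eq_span_C (hφ : Function.Surjective φ)
    (hker : RingHom.ker φ = Ideal.span {C b₀}) : b₀.natDegree = 1 := by
  have hb₀ : b₀ ≠ 0 := by
    rintro rfl
    have hinj : Function.Injective φ := by
      rw [injective_iff_map_eq_zero]
      intro x hx
      simpa [← RingHom.mem_ker, hker] using hx
    exact ringKrullDim_polynomial_polynomial_ne K
      (ringKrullDim_eq_of_ringEquiv (RingEquiv.ofBijective φ ⟨hinj, hφ⟩))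
  have hb₀_unit : ¬IsUnit b₀ := fun hu =>
    RingHom.ker_ne_top φ (hker ▸ Ideal.span_singleton_eq_top.2 (hu.map C))
  have hφb₀ : aeval (φ (C X)) b₀ = 0 := by
    rw [← algHom_C_eq_aeval, ← RingHom.mem_ker, hker]
    exact Ideal.mem_span_singleton_self _
  obtain ⟨a, ha⟩ : ∃ a, φ (C X) = C a :=
    ⟨_, eq_C_of_natDegree_eq_zero (natDegree_eq_zero_of_isAlgebraic ⟨b₀, hb₀, hφb₀⟩)⟩
  have hdvd : b₀ ∣ X - C a := by
    have : C b₀ ∣ C (X - C a) := by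
      rw [← Ideal.mem_span_singleton, ← hker, RingHom.mem_ker, algHom_C_eq_aeval]
      simp [ha]
    simpa only [coe_evalRingHom, eval_C] using _root_.map_dvd (evalRingHom 0) this
  have hle : b₀.natDegree ≤ 1 :=
    (natDegree_le_of_dvd hdvd (X_sub_C_ne_zero a)).trans (natDegree_X_sub_C a).le
  have hne : b₀.natDegree ≠ 0 := fun h0 =>
    hb₀_unit (isUnit_iff_degree_eq_zero.2 (by rw [degree_eq_natDegree hb₀, h0]; rfl))
  omega

/-- `F` is prime, so `b₀, b₁` are coprime and `b₁` is invertible modulo `F`. Its image under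
`φ` is then a nonzero constant `c`, and `F ∣ b₁ - c` forces `b₁ = c` by degree in `X`. -/
theorem isUnit_of_ker_eq_span_C_add_C_mul_X (hb₁ : b₁ ≠ 0)
    (hker : RingHom.ker φ = Ideal.span {C b₀ + C b₁ * X}) : IsUnit b₁ := by
  set F : K[X][X] := C b₀ + C b₁ * X with hF
  have hF_deg : F.natDegree = 1 := by rw [hF, add_comm, natDegree_linear hb₁]
  have hφF : φ F = 0 := by rw [← RingHom.mem_ker, hker]; exact Ideal.mem_span_singleton_self F
  have hF_prime : Prime F := (Ideal.span_singleton_prime (by rintro h; simp [h] at hF_deg)).1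
    (hker ▸ RingHom.ker_isPrime φ)
  obtain ⟨u, v, huv⟩ : IsCoprime b₀ b₁ := IsRelPrime.isCoprime fun d h₀ h₁ =>
    hF_prime.irreducible.isPrimitive (by omega) d
      (dvd_add (_root_.map_dvd C h₀) (dvd_mul_of_dvd_left (_root_.map_dvd C h₁) _))
  have hC_uv : C b₁ * (C v - C u * X) = 1 - C u * F := by
    have := congrArg C huv
    simp only [map_add, map_mul, map_one] at this
    linear_combination this
  have hφb₁ : IsUnit (φ (C b₁)) :=
    IsUnit.of_mul_eq_one (φ (C v - C u * X)) (by rw [← map_mul, hC_uv]; simp [hφF])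
  obtain ⟨c, hc, hφc⟩ := Polynomial.isUnit_iff.1 hφb₁
  have hdvd : F ∣ C (b₁ - C c) := by
    rw [← Ideal.mem_span_singleton, ← hker, RingHom.mem_ker, map_sub, map_sub, ← hφc,
      sub_eq_zero]
    exact (φ.commutes c).symm
  rw [sub_eq_zero.1 (eq_zero_of_dvd_C (by omega) hdvd)]
  exact isUnit_C.2 hc

end LineInPolynomialPolynomial

end Polynomial

namespace Algebra

variable {R A : Type*} [CommSemiring R] [Semiring A] [Algebra R A]

theorem adjoin_pair_eq_top_of_mem {x y z : A} (h : adjoin R {x, y} = ⊤)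
    (hx : x ∈ adjoin R {z, y}) : adjoin R {z, y} = ⊤ := by
  rw [_root_.eq_top_iff, ← h]
  exact adjoin_le (Set.insert_subset hx
    (Set.singleton_subset_iff.2 (subset_adjoin (Set.mem_insert_of_mem _ rfl))))

end Algebra

section AdjoinLinear

variable {K A : Type*} [Field K] [CommRing A] [Algebra K A] {Z T : A}

theorem adjoin_aeval_pair_eq_top_of_natDegree_eq_one (h : Algebra.adjoin K {Z, T} = ⊤)
    {p : K[X]} (hp : p.natDegree = 1) : Algebra.adjoin K {Polynomial.aeval Z p, T} = ⊤ := by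
  refine Algebra.adjoin_pair_eq_top_of_mem h ?_
  have hp₁ : p.coeff 1 ≠ 0 := by
    rw [← hp]
    exact leadingCoeff_ne_zero.2 (by rintro rfl; simp at hp)
  have hp_lin : Polynomial.aeval Z p = p.coeff 1 • Z + algebraMap K A (p.coeff 0) := by
    conv_lhs => rw [eq_X_add_C_of_natDegree_le_one hp.le]
    simp [Algebra.smul_def]
  have hZ : Z = (p.coeff 1)⁻¹ • (Polynomial.aeval Z p - algebraMap K A (p.coeff 0)) := by
    rw [hp_lin, add_sub_cancel_right, inv_smul_smul₀ hp₁]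
  have hmem : (p.coeff 1)⁻¹ • (Polynomial.aeval Z p - algebraMap K A (p.coeff 0)) ∈
      Algebra.adjoin K {Polynomial.aeval Z p, T} :=
    Subalgebra.smul_mem _ (sub_mem (Algebra.subset_adjoin (Set.mem_insert _ _))
      (Subalgebra.algebraMap_mem _ _)) _
  rwa [← hZ] at hmem

theorem adjoin_aeval_add_aeval_mul_pair_eq_top_of_isUnit (h : Algebra.adjoin K {Z, T} = ⊤)
    (b₀ : K[X]) {b₁ : K[X]} (hb₁ : IsUnit b₁) :
    Algebra.adjoin K {Polynomial.aeval Z b₀ + Polynomial.aeval Z b₁ * T, Z} = ⊤ := by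
  refine Algebra.adjoin_pair_eq_top_of_mem (x := T) (by rwa [Set.pair_comm]) ?_
  set f := Polynomial.aeval Z b₀ + Polynomial.aeval Z b₁ * T
  have hT : T = Polynomial.aeval Z (↑hb₁.unit⁻¹ : K[X]) * (f - Polynomial.aeval Z b₀) := by
    rw [add_sub_cancel_left, ← mul_assoc, ← map_mul, hb₁.val_inv_mul, map_one, one_mul]
  have hZ (p : K[X]) : Polynomial.aeval Z p ∈ Algebra.adjoin K {f, Z} :=
    Algebra.adjoin_mono (s := {Z}) (by simp) (aeval_mem_adjoin_singleton K Z)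
  rw [hT]
  exact mul_mem (hZ _) (sub_mem (Algebra.subset_adjoin (Set.mem_insert _ _)) (hZ _))

end AdjoinLinear

namespace MvPolynomial

noncomputable def finTwoAlgEquiv (R : Type*) [CommSemiring R] :
    MvPolynomial (Fin 2) R ≃ₐ[R] R[X][X] :=
  (finSuccEquiv R 1).trans <| Polynomial.mapAlgEquiv <|
    (finSuccEquiv R 0).trans (Polynomial.mapAlgEquiv (isEmptyAlgEquiv R (Fin 0)))

@[simp]
theorem finTwoAlgEquiv_X_zero {R : Type*} [CommSemiring R] :
    finTwoAlgEquiv R (X 0) = Polynomial.X := by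
  simp [finTwoAlgEquiv, finSuccEquiv_X_zero]

@[simp]
theorem finTwoAlgEquiv_X_one {R : Type*} [CommSemiring R] :
    finTwoAlgEquiv R (X 1) = Polynomial.C Polynomial.X := by
  rw [finTwoAlgEquiv, show (1 : Fin 2) = Fin.succ 0 from rfl, AlgEquiv.trans_apply,
    finSuccEquiv_X_succ]
  simp [finSuccEquiv_X_zero]

variable {R : Type*} [CommRing R] [IsDomain R]

theorem algebraicIndependent_of_adjoin_range_eq_top {ι : Type*} [Finite ι]
    {x : ι → MvPolynomial ι R} (h : Algebra.adjoin R (Set.range x) = ⊤) :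
    AlgebraicIndependent R x := by
  have : Algebra.IsAlgebraic (Algebra.adjoin R (Set.range x)) (MvPolynomial ι R) :=
    ⟨fun a => isAlgebraic_algebraMap
      (⟨a, h ▸ Algebra.mem_top⟩ : Algebra.adjoin R (Set.range x))⟩
  refine (Algebra.IsAlgebraic.isTranscendenceBasis_of_lift_le_trdeg_of_finite R x ?_).1
  simp [trdeg_of_isDomain]

theorem exists_algEquiv_of_adjoin_pair_eq_top {Z T : MvPolynomial (Fin 2) R}
    (h : Algebra.adjoin R {Z, T} = ⊤) :
    ∃ Ψ : R[X][X] ≃ₐ[R] MvPolynomial (Fin 2) R,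
      Ψ (Polynomial.C Polynomial.X) = Z ∧ Ψ Polynomial.X = T := by
  have hx : Algebra.adjoin R (Set.range ![T, Z]) = ⊤ := by
    rwa [Matrix.range_cons_cons_empty, Set.pair_comm]
  let e : MvPolynomial (Fin 2) R ≃ₐ[R] MvPolynomial (Fin 2) R :=
    AlgEquiv.ofBijective (aeval ![T, Z]) ⟨algebraicIndependent_of_adjoin_range_eq_top hx, by
      rw [← AlgHom.range_eq_top, ← Algebra.adjoin_range_eq_range_aeval, hx]⟩
  refine ⟨(finTwoAlgEquiv R).symm.trans e, ?_, ?_⟩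
  · rw [AlgEquiv.trans_apply, ← finTwoAlgEquiv_X_one, AlgEquiv.symm_apply_apply]
    simp [e]
  · rw [AlgEquiv.trans_apply, ← finTwoAlgEquiv_X_zero, AlgEquiv.symm_apply_apply]
    simp [e]

end MvPolynomial

/-- A line f in k[Z,T] (i.e. k[Z,T]/(f) ≅ k^[1]) which is linear with respect to some
coordinate system (Z₁,T₁), f = b₀(Z₁) + b₁(Z₁)T₁, is a trivial line:
k[Z,T] = k[f]^[1]. -/
theorem line_linear_in_coords_is_trivial {k : Type*} [Field k]
    (f Z₁ T₁ : MvPolynomial (Fin 2) k) (b₀ b₁ : Polynomial k)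
    (hline : Nonempty ((MvPolynomial (Fin 2) k ⧸ Ideal.span {f}) ≃ₐ[k] Polynomial k))
    (hcoord : Algebra.adjoin k {Z₁, T₁} = (⊤ : Subalgebra k (MvPolynomial (Fin 2) k)))
    (hf : f = Polynomial.aeval Z₁ b₀ + Polynomial.aeval Z₁ b₁ * T₁) :
    ∃ g : MvPolynomial (Fin 2) k,
      AlgebraicIndependent k ![f, g] ∧
      Algebra.adjoin k {f, g} = (⊤ : Subalgebra k (MvPolynomial (Fin 2) k)) := by
  obtain ⟨Ψ, hΨZ, hΨT⟩ := MvPolynomial.exists_algEquiv_of_adjoin_pair_eq_top hcoord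
  set F : k[X][X] := Polynomial.C b₀ + Polynomial.C b₁ * Polynomial.X
  have hΨC (p : k[X]) : Ψ (Polynomial.C p) = Polynomial.aeval Z₁ p := by
    rw [← hΨZ]
    exact algHom_C_eq_aeval Ψ.toAlgHom p
  have hΨF : Ψ F = f := by rw [map_add, map_mul, hΨC, hΨC, hΨT, hf]
  obtain ⟨q⟩ := hline
  let φ : k[X][X] →ₐ[k] k[X] := (q.toAlgHom.comp (Ideal.Quotient.mkₐ k _)).comp Ψ.toAlgHom
  have hφ : Function.Surjective φ :=
    q.surjective.comp ((Ideal.Quotient.mkₐ_surjective k _).comp Ψ.surjective)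
  have hker : RingHom.ker φ = Ideal.span {F} := by
    ext x
    simp [φ, RingHom.mem_ker, Ideal.mem_span_singleton, Ideal.Quotient.eq_zero_iff_mem, ← hΨF]
    exact map_dvd_iff Ψ
  suffices ∃ g, Algebra.adjoin k {f, g} = ⊤ by
    obtain ⟨g, hg⟩ := this
    exact ⟨g, MvPolynomial.algebraicIndependent_of_adjoin_range_eq_top
      (by rwa [Matrix.range_cons_cons_empty]), hg⟩
  rcases eq_or_ne b₁ 0 with rfl | hb₁
  · have hb₀ := natDegree_eq_one_of_ker_eq_span_C hφ (by simpa [F] using hker)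
    exact ⟨T₁, by simpa [hf] using adjoin_aeval_pair_eq_top_of_natDegree_eq_one hcoord hb₀⟩
  · exact ⟨Z₁, hf ▸ adjoin_aeval_add_aeval_mul_pair_eq_top_of_isUnit hcoord b₀
      (isUnit_of_ker_eq_span_C_add_C_mul_X hb₁ hker)⟩
end

section
/- Let k be a field of positive characteristic and g(Z,T) a non-trivial line in k[Z,T] (i.e., k[Z,T]/(g) ≅ k^[1] but k[Z,T] ≠ k[g]^[1]). Then g is not linear with respect to any system of coordinates of k[Z,T]: there is no coordinate system (Z₁,T₁) of k[Z,T] such that g = b₀(Z₁) + b₁(Z₁)T₁ with b₀, b₁ ∈ k[Z₁]. -/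
/-!
After the coordinate change, `g` becomes `u = b₁(x) t + b₀(x)` in `k[x][t]`, with
`k[x][t]/(u) ≃ k[s]`. Since `k` is algebraically closed in `k[s]`, as soon as `q(x̄)` is
constant for some nonconstant `q`, the class `x̄` is itself a constant `c`, i.e. `u ∣ x - c`.
If `b₁` is nonconstant, then `b₀, b₁` are coprime because `u` is prime, so `b₁(x̄)` is a unit
of `k[s]`, hence constant, and `u ∣ x - c` contradicts `deg_t u = 1`. If `b₁ = 0`, then
`b₀(x̄) = 0` gives `b₀ ∣ x - c`, so `b₀` is linear and `(u, t)` is a coordinate system; if `b₁`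
is a nonzero constant, `(u, x)` is one. Either way `g` is a variable, i.e. a trivial line.
-/

open Polynomial

theorem RingHom.injective_of_surjective_of_isNoetherianRing {R : Type*} [CommRing R]
    [IsNoetherianRing R] (f : R →+* R) (hf : Function.Surjective f) :
    Function.Injective f := by
  have hmono : Monotone fun n ↦ RingHom.ker (f ^ n) := monotone_nat_of_le_succ fun n x hx ↦ by
    simp_all [RingHom.mem_ker, pow_succ']
  obtain ⟨n, hn⟩ := monotone_stabilizes_iff_noetherian.mpr inferInstance ⟨_, hmono⟩
  rw [injective_iff_map_eq_zero]
  intro a ha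
  obtain ⟨b, rfl⟩ := (RingHom.coe_pow f n ▸ hf.iterate n) a
  have hb : b ∈ RingHom.ker (f ^ (n + 1)) := by simpa [RingHom.mem_ker, pow_succ'] using ha
  exact (hn (n + 1) n.le_succ).ge hb

theorem MvPolynomial.bijective_aeval_of_adjoin_range_eq_top {σ R : Type*} [Finite σ] [CommRing R]
    [IsNoetherianRing R] {x : σ → MvPolynomial σ R} (h : Algebra.adjoin R (Set.range x) = ⊤) :
    Function.Bijective (aeval (R := R) x) := by
  have hsurj : Function.Surjective (aeval (R := R) x) := by
    rw [← AlgHom.range_eq_top, ← Algebra.adjoin_range_eq_range_aeval, h]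
  exact ⟨RingHom.injective_of_surjective_of_isNoetherianRing (aeval x).toRingHom hsurj, hsurj⟩

theorem MvPolynomial.algebraicIndependent_of_adjoin_range_eq_top_s11 {σ R : Type*} [Finite σ]
    [CommRing R] [IsNoetherianRing R] {x : σ → MvPolynomial σ R}
    (h : Algebra.adjoin R (Set.range x) = ⊤) : AlgebraicIndependent R x :=
  algebraicIndependent_iff_injective_aeval.mpr (bijective_aeval_of_adjoin_range_eq_top h).1

theorem AlgEquiv.adjoin_image_eq_top {R A B : Type*} [CommSemiring R] [Semiring A] [Semiring B]
    [Algebra R A] [Algebra R B] (f : A ≃ₐ[R] B) {s : Set A} (h : Algebra.adjoin R s = ⊤) :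
    Algebra.adjoin R (f '' s) = ⊤ := by
  rw [← AlgEquiv.coe_toAlgHom, Algebra.adjoin_image, h, Algebra.map_top, AlgHom.range_eq_top]
  exact f.surjective

namespace Polynomial

theorem exists_algEquiv_mvPolynomial_fin_two (R : Type*) [CommRing R] :
    ∃ ε : MvPolynomial (Fin 2) R ≃ₐ[R] R[X][X],
      ε (MvPolynomial.X 0) = X ∧ ε (MvPolynomial.X 1) = C X := by
  refine ⟨(MvPolynomial.finSuccEquiv R 1).trans (mapAlgEquiv ((MvPolynomial.finSuccEquiv R 0).trans
    (mapAlgEquiv (MvPolynomial.isEmptyAlgEquiv R (Fin 0))))), ?_, ?_⟩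
  · simp [MvPolynomial.finSuccEquiv_X_zero]
  · have h : MvPolynomial.finSuccEquiv R 1 (MvPolynomial.X 1) = C (MvPolynomial.X 0) :=
      MvPolynomial.finSuccEquiv_X_succ (j := 0)
    simp [h, MvPolynomial.finSuccEquiv_X_zero]

theorem adjoin_X_C_X (R : Type*) [CommRing R] :
    Algebra.adjoin R {(X : R[X][X]), C X} = ⊤ := by
  obtain ⟨ε, h0, h1⟩ := exists_algEquiv_mvPolynomial_fin_two R
  have hX : Set.range (MvPolynomial.X : Fin 2 → MvPolynomial (Fin 2) R) =
      {MvPolynomial.X 0, MvPolynomial.X 1} := by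
    ext; simp [Fin.exists_fin_two, eq_comm]
  have := ε.adjoin_image_eq_top (hX ▸ MvPolynomial.adjoin_range_X)
  rwa [Set.image_pair, h0, h1] at this

theorem aeval_C_X {R : Type*} [CommRing R] (q : R[X]) : aeval (C X : R[X][X]) q = C q := by
  induction q using Polynomial.induction_on <;> simp_all

theorem exists_eq_algebraMap_of_natDegree_aeval_eq_zero {R A : Type*} [CommRing R]
    [NoZeroDivisors R] [CommRing A] [Algebra R A] (φ : A →ₐ[R] R[X]) (hφ : Function.Injective φ)
    {a : A} {q : R[X]} (hq : q.natDegree ≠ 0) (h : (φ (aeval a q)).natDegree = 0) :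
    ∃ c : R, a = algebraMap R A c := by
  rw [← aeval_algHom_apply, ← comp_eq_aeval, natDegree_comp, mul_eq_zero, or_iff_right hq] at h
  refine ⟨(φ a).coeff 0, hφ ?_⟩
  rw [AlgHom.commutes, algebraMap_eq, ← eq_C_of_natDegree_eq_zero h]

theorem exists_dvd_C_X_sub_C_of_quotient {R : Type*} [CommRing R] [NoZeroDivisors R]
    {u : R[X][X]} (e : (R[X][X] ⧸ Ideal.span {u}) ≃ₐ[R] R[X]) {q : R[X]} (hq : q.natDegree ≠ 0)
    (h : (e (Ideal.Quotient.mk _ (C q))).natDegree = 0) : ∃ c : R, u ∣ C (X - C c) := by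
  obtain ⟨c, hc⟩ := exists_eq_algebraMap_of_natDegree_aeval_eq_zero
    (e : (R[X][X] ⧸ Ideal.span {u}) →ₐ[R] R[X]) e.injective
    (a := Ideal.Quotient.mk (Ideal.span {u}) (C X)) hq
    (by rwa [← Ideal.Quotient.mkₐ_eq_mk R, aeval_algHom_apply, aeval_C_X])
  refine ⟨c, Ideal.mem_span_singleton.mp (Ideal.Quotient.eq_zero_iff_mem.mp ?_)⟩
  rw [map_sub, map_sub, hc, sub_eq_zero]
  rfl

section Field

variable {k : Type*} [Field k]

theorem natDegree_eq_one_of_quotient_span_C {b : k[X]}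
    (e : (k[X][X] ⧸ Ideal.span {C b}) ≃ₐ[k] k[X]) : b.natDegree = 1 := by
  have hb : b ≠ 0 := by
    rintro rfl
    let f : k[X][X] ≃+* k[X] := (RingEquiv.quotientBot _).symm.trans
      ((Ideal.quotEquivOfEq (by simp)).trans e.toRingEquiv)
    have := IsPrincipalIdealRing.of_surjective f.symm.toRingHom f.symm.surjective
    exact Polynomial.not_isField _ (Ideal.IsField.of_isPrincipalIdealRing_polynomial (R := k[X]))
  have hdeg : b.natDegree ≠ 0 := by
    intro h
    have hunit : IsUnit (C b) := isUnit_C.mpr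
      (isUnit_iff_degree_eq_zero.mpr ((degree_eq_iff_natDegree_eq hb).mpr h))
    have := Ideal.Quotient.subsingleton_iff.mpr (Ideal.span_singleton_eq_top.mpr hunit)
    exact not_subsingleton k[X] e.symm.injective.subsingleton
  obtain ⟨c, hc⟩ := exists_dvd_C_X_sub_C_of_quotient e hdeg
    (by rw [Ideal.Quotient.mk_singleton_self, map_zero, natDegree_zero])
  have hdvd : b ∣ X - C c := by
    simpa only [coeff_C_zero] using (C_dvd_iff_dvd_coeff _ _).mp hc 0
  have := natDegree_le_of_dvd hdvd (X_sub_C_ne_zero c)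
  rw [natDegree_X_sub_C] at this
  omega

theorem natDegree_eq_zero_of_quotient_linear {b₀ b₁ : k[X]} (hb₁ : b₁ ≠ 0)
    (e : (k[X][X] ⧸ Ideal.span {C b₁ * X + C b₀}) ≃ₐ[k] k[X]) : b₁.natDegree = 0 := by
  have hu : (C b₁ * X + C b₀).natDegree = 1 := natDegree_linear hb₁
  have hprime : Prime (C b₁ * X + C b₀) := by
    have : IsDomain (k[X][X] ⧸ Ideal.span {C b₁ * X + C b₀}) :=
      e.toRingEquiv.toMulEquiv.isDomain
    exact (Ideal.span_singleton_prime (ne_zero_of_natDegree_gt (hu ▸ zero_lt_one))).mp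
      ((Ideal.Quotient.isDomain_iff_prime _).mp this)
  have hcop : IsCoprime b₁ b₀ := isCoprime_of_irreducible_dvd (fun h ↦ hb₁ h.1)
    fun z hz h₁ h₀ ↦ hz.not_isUnit <| hprime.irreducible.isPrimitive (by omega) z <|
      dvd_add (dvd_mul_of_dvd_left (_root_.map_dvd C h₁) _) (_root_.map_dvd C h₀)
  have hunit : IsUnit (Ideal.Quotient.mk (Ideal.span {C b₁ * X + C b₀}) (C b₁)) := by
    have hrel : Ideal.Quotient.mk (Ideal.span {C b₁ * X + C b₀}) (C b₀) =
        Ideal.Quotient.mk _ (C b₁) * Ideal.Quotient.mk _ (-X) := by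
      rw [← map_mul, Ideal.Quotient.eq]
      convert Ideal.mem_span_singleton_self (C b₁ * X + C b₀) using 1
      ring
    have := (hcop.map C).map (S := k[X][X] ⧸ Ideal.span {C b₁ * X + C b₀}) (Ideal.Quotient.mk _)
    rw [hrel] at this
    exact isCoprime_self.mp this.of_mul_right_left
  by_contra h
  obtain ⟨c, hc⟩ :=
    exists_dvd_C_X_sub_C_of_quotient e h (natDegree_eq_zero_of_isUnit (hunit.map e))
  have := natDegree_le_of_dvd hc (C_ne_zero.mpr (X_sub_C_ne_zero c))
  rw [natDegree_C, hu] at this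
  omega

theorem adjoin_C_C_mul_X_add_C_C_X_eq_top {c : k} (hc : c ≠ 0) (b₀ : k[X]) :
    Algebra.adjoin k {C (C c) * X + C b₀, C X} = ⊤ := by
  rw [eq_top_iff, ← adjoin_X_C_X, Algebra.adjoin_le_iff, Set.insert_subset_iff,
    Set.singleton_subset_iff, SetLike.mem_coe, SetLike.mem_coe]
  refine ⟨?_, Algebra.subset_adjoin (Set.mem_insert_of_mem _ rfl)⟩
  have hb₀ : C b₀ ∈ Algebra.adjoin k {C X} := by
    simpa only [aeval_C_X] using aeval_mem_adjoin_singleton k (C X : k[X][X]) (p := b₀)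
  have hX : c⁻¹ • (C (C c) * X + C b₀ - C b₀) = (X : k[X][X]) := by
    rw [add_sub_cancel_right, Algebra.smul_def, algebraMap_apply, algebraMap_eq, ← mul_assoc,
      ← C_mul, ← C_mul, inv_mul_cancel₀ hc, C_1, C_1, one_mul]
  have hu : C (C c) * X + C b₀ ∈ Algebra.adjoin k {C (C c) * X + C b₀, C X} :=
    Algebra.subset_adjoin (Set.mem_insert _ _)
  have hb₀' : C b₀ ∈ Algebra.adjoin k {C (C c) * X + C b₀, C X} :=
    Algebra.adjoin_mono (Set.subset_insert _ _) hb₀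
  have := Subalgebra.smul_mem _ (Subalgebra.sub_mem _ hu hb₀') c⁻¹
  rwa [hX] at this

theorem adjoin_C_C_mul_X_add_C_X_eq_top {a : k} (ha : a ≠ 0) (b : k) :
    Algebra.adjoin k {C (C a * X + C b), X} = ⊤ := by
  rw [eq_top_iff, ← adjoin_X_C_X, Algebra.adjoin_le_iff, Set.insert_subset_iff,
    Set.singleton_subset_iff, SetLike.mem_coe, SetLike.mem_coe]
  refine ⟨Algebra.subset_adjoin (Set.mem_insert_of_mem _ rfl), ?_⟩
  have hCX : a⁻¹ • (C (C a * X + C b) - algebraMap k _ b) = (C X : k[X][X]) := by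
    rw [algebraMap_apply, algebraMap_eq, C_add, add_sub_cancel_right, C_mul', smul_C,
      inv_smul_smul₀ ha]
  have hu : C (C a * X + C b) ∈ Algebra.adjoin k {C (C a * X + C b), X} :=
    Algebra.subset_adjoin (Set.mem_insert _ _)
  have := Subalgebra.smul_mem _ (Subalgebra.sub_mem _ hu (Subalgebra.algebraMap_mem _ b)) a⁻¹
  rwa [hCX] at this

theorem exists_adjoin_eq_top_of_quotient_linear {b₀ b₁ : k[X]}
    (e : (k[X][X] ⧸ Ideal.span {C b₁ * X + C b₀}) ≃ₐ[k] k[X]) :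
    ∃ v, Algebra.adjoin k {C b₁ * X + C b₀, v} = ⊤ := by
  rcases eq_or_ne b₁ 0 with rfl | hb₁
  · rw [C_0, zero_mul, zero_add] at e ⊢
    have hdeg := natDegree_eq_one_of_quotient_span_C e
    obtain ⟨a, b, rfl⟩ := exists_eq_X_add_C_of_natDegree_le_one hdeg.le
    have ha : a ≠ 0 := by rintro rfl; simp at hdeg
    exact ⟨X, adjoin_C_C_mul_X_add_C_X_eq_top ha b⟩
  · obtain ⟨c, rfl⟩ : ∃ c, b₁ = C c :=
      ⟨_, eq_C_of_natDegree_eq_zero (natDegree_eq_zero_of_quotient_linear hb₁ e)⟩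
    exact ⟨C X, adjoin_C_C_mul_X_add_C_C_X_eq_top (by rintro rfl; simp at hb₁) b₀⟩

end Field

theorem exists_algEquiv_of_adjoin_eq_top {R : Type*} [CommRing R] [IsNoetherianRing R]
    {Z₁ T₁ : MvPolynomial (Fin 2) R} (h : Algebra.adjoin R {Z₁, T₁} = ⊤) :
    ∃ χ : R[X][X] ≃ₐ[R] MvPolynomial (Fin 2) R, χ (C X) = Z₁ ∧ χ X = T₁ := by
  obtain ⟨ε, h0, h1⟩ := exists_algEquiv_mvPolynomial_fin_two R
  have hbij := MvPolynomial.bijective_aeval_of_adjoin_range_eq_top (x := ![T₁, Z₁])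
    (by rwa [Matrix.range_cons_cons_empty, Set.pair_comm])
  refine ⟨ε.symm.trans (AlgEquiv.ofBijective _ hbij), ?_, ?_⟩
  · simp [← h1]
  · simp [← h0]

end Polynomial

theorem nontrivial_line_not_linear_general {k : Type*} [Field k] (g : MvPolynomial (Fin 2) k)
    (hline : Nonempty ((MvPolynomial (Fin 2) k ⧸ Ideal.span {g}) ≃ₐ[k] Polynomial k))
    (hnontriv : ¬ ∃ h : MvPolynomial (Fin 2) k,
        AlgebraicIndependent k ![g, h] ∧
        Algebra.adjoin k {g, h} = (⊤ : Subalgebra k (MvPolynomial (Fin 2) k))) :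
    ¬ ∃ (Z₁ T₁ : MvPolynomial (Fin 2) k) (b₀ b₁ : Polynomial k),
        Algebra.adjoin k {Z₁, T₁} = (⊤ : Subalgebra k (MvPolynomial (Fin 2) k)) ∧
        g = Polynomial.aeval Z₁ b₀ + Polynomial.aeval Z₁ b₁ * T₁ := by
  rintro ⟨Z₁, T₁, b₀, b₁, hZT, rfl⟩
  obtain ⟨e⟩ := hline
  obtain ⟨χ, hχZ, hχT⟩ := exists_algEquiv_of_adjoin_eq_top hZT
  have hχC (b : k[X]) : χ (C b) = aeval Z₁ b := by
    rw [← aeval_C_X, ← aeval_algHom_apply, hχZ]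
  have hχ : χ (C b₁ * X + C b₀) = aeval Z₁ b₀ + aeval Z₁ b₁ * T₁ := by
    rw [map_add, map_mul, hχC, hχC, hχT, add_comm]
  obtain ⟨v, hv⟩ := exists_adjoin_eq_top_of_quotient_linear
    ((Ideal.quotientEquivAlg (Ideal.span {C b₁ * X + C b₀}) _ χ
      (by rw [Ideal.map_span, Set.image_singleton, ← hχ]; rfl)).trans e)
  have hgen := χ.adjoin_image_eq_top hv
  rw [Set.image_pair, hχ] at hgen
  exact hnontriv ⟨χ v, MvPolynomial.algebraicIndependent_of_adjoin_range_eq_top_s11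
    (by rwa [Matrix.range_cons_cons_empty]), hgen⟩

/-- Over a field of positive characteristic, a non-trivial line g in k[Z,T] is not
linear with respect to any system of coordinates of k[Z,T]. -/
theorem nontrivial_line_not_linear {k : Type*} [Field k] (p : ℕ) (hp : p.Prime)
    [CharP k p] (g : MvPolynomial (Fin 2) k)
    (hline : Nonempty ((MvPolynomial (Fin 2) k ⧸ Ideal.span {g}) ≃ₐ[k] Polynomial k))
    (hnontriv : ¬ ∃ h : MvPolynomial (Fin 2) k,
        AlgebraicIndependent k ![g, h] ∧
        Algebra.adjoin k {g, h} = (⊤ : Subalgebra k (MvPolynomial (Fin 2) k))) :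
    ¬ ∃ (Z₁ T₁ : MvPolynomial (Fin 2) k) (b₀ b₁ : Polynomial k),
        Algebra.adjoin k {Z₁, T₁} = (⊤ : Subalgebra k (MvPolynomial (Fin 2) k)) ∧
        g = Polynomial.aeval Z₁ b₀ + Polynomial.aeval Z₁ b₁ * T₁ :=
  nontrivial_line_not_linear_general g hline hnontriv
end
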